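/- arXiv:2004.09458 — 5 statements merged into one kernel-verified Lean document; each statement's English description precedes it below -/
import Mathlib

section
/- Let $U$ be a random variable with distribution $G$, let $Z$ be a random variable with conditional density $p(z \mid u)$ given $U = u$ with respect to a measure $\lambda$, and let $Y(0), Y(1)$ be random variables with $(Y(0), Y(1)) \perp Z \mid U$. Let $c \in \mathbb{R}$, $W = \mathbf{1}\{Z \geq c\}$, $Y = Y(W)$, and let $\gamma_+, \gamma_- : \mathbb{R} \to \mathbb{R}$ be bounded measurable weight functions. Define $\alpha_{(w)}(u) = \mathbb{E}[Y(w) \mid U = u]$, $\tau(u) = \alpha_{(1)}(u) - \alpha_{(0)}(u)$, $h_+(u) = \int_{[c,\infty)} \gamma_+(z) p(z \mid u)\, d\lambda(z)$ and $h_-(u) = \int_{(-\infty,c)} \gamma_-(z) p(z \mid u)\, d\lambda(z)$. Then $\mathbb{E}[\gamma_+(Z) Y \mathbf{1}\{Z \geq c\}] - \mathbb{E}[\gamma_-(Z) Y \mathbf{1}\{Z < c\}] = \int h_+(u)\tau(u)\, dG(u) + \int (h_+(u) - h_-(u))\alpha_{(0)}(u)\, dG(u)$. -/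
open MeasureTheory

/-!
With the cutoff weights `g₊ = γ₊ 1[c,∞)` and `g₋ = γ₋ 1(-∞,c)`, the joint identities tested
against `φ ≡ 1` give `E[γ₊(Z) Y 1{Z ≥ c}] = ∫ α₁ h₊ dG` and `E[γ₋(Z) Y 1{Z < c}] = ∫ α₀ h₋ dG`;
the decomposition is then linear algebra, provided `α₁ h₊`, `α₀ h₊`, `α₀ h₋` are `G`-integrable.
That follows by duality: testing a function `F` against the truncated signs
`sign F · 1{|F| ≤ n}` bounds `∫_{|F| ≤ n} |F| dG` by `sup |Y g(Z)|`, uniformly in `n`, and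
monotone convergence bounds `∫ |F| dG`.
-/

theorem integrable_of_integral_mul_le {α : Type*} [MeasurableSpace α] {μ : Measure α}
    [IsFiniteMeasure μ] {F : α → ℝ} (hF : Measurable F) (B : ℝ)
    (hB : ∀ φ : α → ℝ, Measurable φ → (∀ x, |φ x| ≤ 1) → ∫ x, F x * φ x ∂μ ≤ B) :
    Integrable F μ := by
  set S : ℕ → Set α := fun n => {x | |F x| ≤ n}
  have hS : ∀ n, MeasurableSet (S n) := fun n => measurableSet_le hF.abs measurable_const
  have hS_mono : Monotone S := fun m n hmn x (hx : |F x| ≤ m) => hx.trans (by exact_mod_cast hmn)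
  have hS_univ : ⋃ n, S n = Set.univ :=
    Set.eq_univ_of_forall fun x => Set.mem_iUnion.2 (exists_nat_ge |F x|)
  have hFS : ∀ n, IntegrableOn F (S n) μ := fun n =>
    IntegrableOn.of_bound (measure_lt_top _ _) hF.aestronglyMeasurable.restrict n
      ((ae_restrict_mem (hS n)).mono fun x hx => hx)
  have h_trunc : ∀ n, ∫ x in S n, ‖F x‖ ∂μ ≤ B := by
    intro n
    convert hB ((S n).indicator fun x => if 0 ≤ F x then 1 else -1) ?_ ?_ using 1
    · rw [← integral_indicator (hS n)]
      congr 1; ext x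
      by_cases hx : x ∈ S n
      · by_cases h0 : 0 ≤ F x
        · simp [hx, h0, abs_of_nonneg h0]
        · simp [hx, h0, abs_of_neg (not_le.1 h0)]
      · simp [hx]
    · exact (Measurable.ite (measurableSet_le measurable_const hF) measurable_const
        measurable_const).indicator (hS n)
    · intro x; by_cases hx : x ∈ S n <;> by_cases h0 : 0 ≤ F x <;> simp [hx, h0]
  refine ⟨hF.aestronglyMeasurable, ?_⟩
  rw [hasFiniteIntegral_iff_enorm, ← setLIntegral_univ, ← hS_univ,
    setLIntegral_iUnion_of_directed _ hS_mono.directed_le]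
  refine (iSup_le fun n => ?_).trans_lt (ENNReal.ofReal_lt_top (r := B))
  rw [← ofReal_integral_norm_eq_lintegral_enorm (hFS n)]
  exact ENNReal.ofReal_le_ofReal (h_trunc n)

theorem integrable_of_integral_comp_mul_eq {Ω α : Type*} [MeasurableSpace Ω] [MeasurableSpace α]
    {P : Measure Ω} [IsProbabilityMeasure P] {μ : Measure α} [IsFiniteMeasure μ]
    {X : Ω → ℝ} {C : ℝ} (hX : ∀ ω, |X ω| ≤ C) {V : Ω → α} {F : α → ℝ} (hF : Measurable F)
    (h : ∀ φ : α → ℝ, Measurable φ → (∃ Cφ, ∀ x, |φ x| ≤ Cφ) →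
      ∫ ω, X ω * φ (V ω) ∂P = ∫ x, F x * φ x ∂μ) :
    Integrable F μ := by
  refine integrable_of_integral_mul_le (μ := μ) hF C fun φ hφ hφ1 => ?_
  rw [← h φ hφ ⟨1, hφ1⟩]
  have hXφ : ∀ ω, ‖X ω * φ (V ω)‖ ≤ C := fun ω => by
    simpa [abs_mul] using
      mul_le_mul (hX ω) (hφ1 (V ω)) (abs_nonneg _) ((abs_nonneg _).trans (hX ω))
  simpa using
    (Real.le_norm_self _).trans (norm_integral_le_of_norm_le_const (μ := P) (.of_forall hXφ))

section NoisyRunningVariable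

variable {Ω : Type*} [MeasurableSpace Ω]

/-- The integrated form of `E[Y | U] = α(U)`, `Z | U ~ p(· | U) dλ`, `Y ⊥ Z | U` and `U ~ G`. -/
def HasCondMeanAndDensity (P : Measure Ω) (Y U Z : Ω → ℝ) (α : ℝ → ℝ) (p : ℝ → ℝ → ℝ)
    (G lam : Measure ℝ) : Prop :=
  ∀ k φ : ℝ → ℝ, Measurable k → Measurable φ →
    (∃ Ck, ∀ z, |k z| ≤ Ck) → (∃ Cφ, ∀ u, |φ u| ≤ Cφ) →
    ∫ ω, Y ω * k (Z ω) * φ (U ω) ∂P = ∫ u, α u * (∫ z, k z * p z u ∂lam) * φ u ∂G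

variable {P : Measure Ω} {U Z Y : Ω → ℝ} {G lam : Measure ℝ} {p : ℝ → ℝ → ℝ} {α : ℝ → ℝ}
  {g : ℝ → ℝ} {Cg : ℝ}

theorem measurable_integral_mul_density [SigmaFinite lam] (hpm : Measurable (Function.uncurry p))
    (hgm : Measurable g) : Measurable fun u => ∫ z, g z * p z u ∂lam :=
  (((hgm.comp measurable_snd).mul (hpm.comp measurable_swap)).stronglyMeasurable
    |>.integral_prod_right').measurable

theorem HasCondMeanAndDensity.integrable_mul_integral [IsProbabilityMeasure P]
    [IsFiniteMeasure G] [SigmaFinite lam] (hJ : HasCondMeanAndDensity P Y U Z α p G lam)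
    (hpm : Measurable (Function.uncurry p)) (hαm : Measurable α) {CY : ℝ}
    (hYb : ∀ ω, |Y ω| ≤ CY) (hgm : Measurable g) (hgb : ∀ z, |g z| ≤ Cg) :
    Integrable (fun u => α u * ∫ z, g z * p z u ∂lam) G := by
  have hXb : ∀ ω, |Y ω * g (Z ω)| ≤ CY * Cg := fun ω => by
    simpa [abs_mul] using
      mul_le_mul (hYb ω) (hgb (Z ω)) (abs_nonneg _) ((abs_nonneg _).trans (hYb ω))
  exact integrable_of_integral_comp_mul_eq (V := U) (μ := G) hXb
    (hαm.mul (measurable_integral_mul_density hpm hgm))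
    fun φ hφm hφb => hJ g φ hgm hφm ⟨Cg, hgb⟩ hφb

theorem HasCondMeanAndDensity.integral_mul_comp (hJ : HasCondMeanAndDensity P Y U Z α p G lam)
    (hgm : Measurable g) (hgb : ∀ z, |g z| ≤ Cg) :
    ∫ ω, Y ω * g (Z ω) ∂P = ∫ u, α u * ∫ z, g z * p z u ∂lam ∂G := by
  simpa using hJ g 1 hgm measurable_const ⟨Cg, hgb⟩ ⟨1, by simp⟩

end NoisyRunningVariable

theorem stmt0_general
    {Ω : Type*} [MeasurableSpace Ω] (P : Measure Ω) [IsProbabilityMeasure P]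
    (U Z Y0 Y1 : Ω → ℝ)
    (CY : ℝ) (hY0b : ∀ ω, |Y0 ω| ≤ CY) (hY1b : ∀ ω, |Y1 ω| ≤ CY)
    (G : Measure ℝ) [IsProbabilityMeasure G]
    (lam : Measure ℝ) [SigmaFinite lam]
    (p : ℝ → ℝ → ℝ) (hpm : Measurable (Function.uncurry p))
    (α0 α1 τ : ℝ → ℝ) (hα0m : Measurable α0) (hα1m : Measurable α1)
    (hτdef : ∀ u, τ u = α1 u - α0 u)
    (hJoint0 : ∀ g φf : ℝ → ℝ, Measurable g → Measurable φf →
      (∃ Cg, ∀ z, |g z| ≤ Cg) → (∃ Cf, ∀ u, |φf u| ≤ Cf) →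
      ∫ ω, Y0 ω * g (Z ω) * φf (U ω) ∂P
        = ∫ u, α0 u * (∫ z, g z * p z u ∂lam) * φf u ∂G)
    (hJoint1 : ∀ g φf : ℝ → ℝ, Measurable g → Measurable φf →
      (∃ Cg, ∀ z, |g z| ≤ Cg) → (∃ Cf, ∀ u, |φf u| ≤ Cf) →
      ∫ ω, Y1 ω * g (Z ω) * φf (U ω) ∂P
        = ∫ u, α1 u * (∫ z, g z * p z u ∂lam) * φf u ∂G)
    (c : ℝ) (γp γm : ℝ → ℝ) (hγpm : Measurable γp) (hγmm : Measurable γm)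
    (Cγ : ℝ) (hγpb : ∀ z, |γp z| ≤ Cγ) (hγmb : ∀ z, |γm z| ≤ Cγ)
    (hplus hminus : ℝ → ℝ)
    (hhp : ∀ u, hplus u = ∫ z in Set.Ici c, γp z * p z u ∂lam)
    (hhm : ∀ u, hminus u = ∫ z in Set.Iio c, γm z * p z u ∂lam) :
    (∫ ω, (if c ≤ Z ω then γp (Z ω) * (if c ≤ Z ω then Y1 ω else Y0 ω) else 0) ∂P)
      - (∫ ω, (if Z ω < c then γm (Z ω) * (if c ≤ Z ω then Y1 ω else Y0 ω) else 0) ∂P)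
    = (∫ u, hplus u * τ u ∂G) + (∫ u, (hplus u - hminus u) * α0 u ∂G) := by
  have hJ0 : HasCondMeanAndDensity P Y0 U Z α0 p G lam := hJoint0
  have hJ1 : HasCondMeanAndDensity P Y1 U Z α1 p G lam := hJoint1
  set gp := (Set.Ici c).indicator γp
  set gm := (Set.Iio c).indicator γm
  have hgpm : Measurable gp := hγpm.indicator measurableSet_Ici
  have hgmm : Measurable gm := hγmm.indicator measurableSet_Iio
  have hgpb : ∀ z, |gp z| ≤ Cγ := fun z => (norm_indicator_le_norm_self γp z).trans (hγpb z)
  have hgmb : ∀ z, |gm z| ≤ Cγ := fun z => (norm_indicator_le_norm_self γm z).trans (hγmb z)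
  have hplus_eq : ∀ u, ∫ z, gp z * p z u ∂lam = hplus u := fun u => by
    simp only [hhp, gp, ← integral_indicator measurableSet_Ici, Set.indicator_mul_left]
  have hminus_eq : ∀ u, ∫ z, gm z * p z u ∂lam = hminus u := fun u => by
    simp only [hhm, gm, ← integral_indicator measurableSet_Iio, Set.indicator_mul_left]
  have hI1p : Integrable (fun u => α1 u * hplus u) G := by
    simpa only [hplus_eq] using hJ1.integrable_mul_integral hpm hα1m hY1b hgpm hgpb
  have hI0p : Integrable (fun u => α0 u * hplus u) G := by
    simpa only [hplus_eq] using hJ0.integrable_mul_integral hpm hα0m hY0b hgpm hgpb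
  have hI0m : Integrable (fun u => α0 u * hminus u) G := by
    simpa only [hminus_eq] using hJ0.integrable_mul_integral hpm hα0m hY0b hgmm hgmb
  have hLp : ∀ ω, (if c ≤ Z ω then γp (Z ω) * (if c ≤ Z ω then Y1 ω else Y0 ω) else 0)
      = Y1 ω * gp (Z ω) := fun ω => by
    by_cases h : c ≤ Z ω <;> simp [gp, h, mul_comm]
  have hLm : ∀ ω, (if Z ω < c then γm (Z ω) * (if c ≤ Z ω then Y1 ω else Y0 ω) else 0)
      = Y0 ω * gm (Z ω) := fun ω => by
    by_cases h : Z ω < c <;> simp [gm, h, not_le.2, mul_comm]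
  have hRp : ∀ u, hplus u * τ u = α1 u * hplus u - α0 u * hplus u := fun u => by
    rw [hτdef]; ring
  have hRm : ∀ u, (hplus u - hminus u) * α0 u = α0 u * hplus u - α0 u * hminus u :=
    fun u => by ring
  simp only [hLp, hLm, hJ1.integral_mul_comp hgpm hgpb, hJ0.integral_mul_comp hgmm hgmb,
    hplus_eq, hminus_eq, hRp, hRm,
    integral_sub hI1p hI0p, integral_sub hI0p hI0m]
  ring

/-- Bias decomposition (Theorem 1) for weighted RD estimators with a noisy
running variable. The conditional density of `Z` given `U`, the exogeneity of
the measurement noise, and the definition of `α₀, α₁` as conditional means of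
the potential outcomes given `U` are encoded in integrated form against bounded
measurable test functions (`hJoint0`, `hJoint1`). -/
theorem stmt0
    {Ω : Type*} [MeasurableSpace Ω] (P : Measure Ω) [IsProbabilityMeasure P]
    (U Z Y0 Y1 : Ω → ℝ)
    (hUm : Measurable U) (hZm : Measurable Z)
    (hY0m : Measurable Y0) (hY1m : Measurable Y1)
    (CY : ℝ) (hY0b : ∀ ω, |Y0 ω| ≤ CY) (hY1b : ∀ ω, |Y1 ω| ≤ CY)
    (G : Measure ℝ) [IsProbabilityMeasure G]
    (lam : Measure ℝ) [SigmaFinite lam]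
    (p : ℝ → ℝ → ℝ) (hpm : Measurable (Function.uncurry p)) (hpnn : ∀ z u, 0 ≤ p z u)
    (α0 α1 τ : ℝ → ℝ) (hα0m : Measurable α0) (hα1m : Measurable α1)
    (hτdef : ∀ u, τ u = α1 u - α0 u)
    (hJoint0 : ∀ g φf : ℝ → ℝ, Measurable g → Measurable φf →
      (∃ Cg, ∀ z, |g z| ≤ Cg) → (∃ Cf, ∀ u, |φf u| ≤ Cf) →
      ∫ ω, Y0 ω * g (Z ω) * φf (U ω) ∂P
        = ∫ u, α0 u * (∫ z, g z * p z u ∂lam) * φf u ∂G)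
    (hJoint1 : ∀ g φf : ℝ → ℝ, Measurable g → Measurable φf →
      (∃ Cg, ∀ z, |g z| ≤ Cg) → (∃ Cf, ∀ u, |φf u| ≤ Cf) →
      ∫ ω, Y1 ω * g (Z ω) * φf (U ω) ∂P
        = ∫ u, α1 u * (∫ z, g z * p z u ∂lam) * φf u ∂G)
    (c : ℝ) (γp γm : ℝ → ℝ) (hγpm : Measurable γp) (hγmm : Measurable γm)
    (Cγ : ℝ) (hγpb : ∀ z, |γp z| ≤ Cγ) (hγmb : ∀ z, |γm z| ≤ Cγ)
    (hplus hminus : ℝ → ℝ)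
    (hhp : ∀ u, hplus u = ∫ z in Set.Ici c, γp z * p z u ∂lam)
    (hhm : ∀ u, hminus u = ∫ z in Set.Iio c, γm z * p z u ∂lam) :
    (∫ ω, (if c ≤ Z ω then γp (Z ω) * (if c ≤ Z ω then Y1 ω else Y0 ω) else 0) ∂P)
      - (∫ ω, (if Z ω < c then γm (Z ω) * (if c ≤ Z ω then Y1 ω else Y0 ω) else 0) ∂P)
    = (∫ u, hplus u * τ u ∂G) + (∫ u, (hplus u - hminus u) * α0 u ∂G) :=
  stmt0_general P U Z Y0 Y1 CY hY0b hY1b G lam p hpm α0 α1 τ hα0m hα1m hτdef hJoint0 hJoint1 c γp γm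
    hγpm hγmm Cγ hγpb hγmb hplus hminus hhp hhm
end

section
/- Under the setup of the bias decomposition theorem (exogenous noise $Z \mid U \sim p(\cdot \mid U)$, treatment $W = \mathbf{1}\{Z \geq c\}$), suppose additionally that $\tau(u) = \tau$ is constant in $u$, that there exist constants $M \geq 0$ and $\alpha_{(0)} \in \mathbb{R}$ with $|\alpha_{(0)}(u) - \alpha_{(0)}| \leq M$ for all $u$, and that the weights are normalized: $\mathbb{E}[\gamma_+(Z)\mathbf{1}\{Z \geq c\}] = 1$ and $\mathbb{E}[\gamma_-(Z)\mathbf{1}\{Z < c\}] = 1$. Then $|\mathbb{E}[\gamma_+(Z) Y \mathbf{1}\{Z \geq c\}] - \mathbb{E}[\gamma_-(Z) Y \mathbf{1}\{Z < c\}] - \tau| \leq M \sup_{u \in \mathbb{R}} |h_+(u) - h_-(u)|$. -/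
open MeasureTheory

/-!
Integrating out the noise turns the two weighted averages into `∫ α₁ h₊ dG` and `∫ α₀ h₋ dG`,
and the normalizations into `∫ h₊ dG = ∫ h₋ dG = 1`. With `α₁ = α₀ + τ`, these normalizations
absorb `τ` and any constant `a₀`, so the bias equals `∫ (α₀ - a₀)(h₊ - h₋) dG`, whose integrand
is bounded by `M · B`.
-/

theorem integral_mul_indicator_comp_eq {Ω : Type*} [MeasurableSpace Ω] {P : Measure Ω}
    {Z Y : Ω → ℝ} {G lam : Measure ℝ} {p : ℝ → ℝ → ℝ} {α : ℝ → ℝ}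
    (hrep : ∀ g : ℝ → ℝ, Measurable g → (∃ C, ∀ z, |g z| ≤ C) →
      ∫ ω, Y ω * g (Z ω) ∂P = ∫ u, α u * ∫ z, g z * p z u ∂lam ∂G)
    {S : Set ℝ} (hS : MeasurableSet S) {γ : ℝ → ℝ} (hγ : Measurable γ) {C : ℝ}
    (hγC : ∀ z, |γ z| ≤ C) :
    ∫ ω, Y ω * S.indicator γ (Z ω) ∂P = ∫ u, α u * ∫ z in S, γ z * p z u ∂lam ∂G := by
  rw [hrep _ (hγ.indicator hS) ⟨C, fun z => (norm_indicator_le_norm_self γ z).trans (hγC z)⟩]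
  refine integral_congr_ae (.of_forall fun u => ?_)
  dsimp only
  rw [← integral_indicator hS]
  congr 2 with z
  exact (Set.indicator_mul_left S γ (p · u)).symm

theorem integral_add_mul_sub_integral_mul_sub_eq {X : Type*} [MeasurableSpace X]
    {G : Measure X} {f hplus hminus : X → ℝ} (hf : MemLp f ⊤ G)
    (hplus_one : ∫ x, hplus x ∂G = 1) (hminus_one : ∫ x, hminus x ∂G = 1) (a τ : ℝ) :
    ∫ x, (f x + τ) * hplus x ∂G - ∫ x, f x * hminus x ∂G - τ
      = ∫ x, (f x - a) * (hplus x - hminus x) ∂G := by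
  have ip : Integrable hplus G := .of_integral_ne_zero (by simp [hplus_one])
  have im : Integrable hminus G := .of_integral_ne_zero (by simp [hminus_one])
  have ifp : Integrable (fun x => f x * hplus x) G := ip.mul_of_top_right hf
  have ifm : Integrable (fun x => f x * hminus x) G := im.mul_of_top_right hf
  have expand_left : (fun x => (f x + τ) * hplus x) = fun x => f x * hplus x + τ * hplus x := by
    ext; ring
  have expand_right : (fun x => (f x - a) * (hplus x - hminus x))
      = fun x => (f x * hplus x - f x * hminus x) - (a * hplus x - a * hminus x) := by
    ext; ring
  have ifd : Integrable (fun x => f x * hplus x - f x * hminus x) G := ifp.sub ifm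
  have iam : Integrable (fun x => a * hplus x - a * hminus x) G :=
    (ip.const_mul a).sub (im.const_mul a)
  rw [expand_left, expand_right, integral_add ifp (ip.const_mul τ),
    integral_sub ifd iam, integral_sub ifp ifm,
    integral_sub (ip.const_mul a) (im.const_mul a), integral_const_mul, integral_const_mul,
    integral_const_mul, hplus_one, hminus_one]
  ring

theorem abs_integral_add_mul_sub_integral_mul_sub_le {X : Type*} [MeasurableSpace X]
    {G : Measure X} [IsProbabilityMeasure G] {f hplus hminus : X → ℝ}
    (hf : AEStronglyMeasurable f G) {a M B : ℝ} (hfa : ∀ x, |f x - a| ≤ M)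
    (hplus_one : ∫ x, hplus x ∂G = 1) (hminus_one : ∫ x, hminus x ∂G = 1)
    (hB : ∀ x, |hplus x - hminus x| ≤ B) (τ : ℝ) :
    |∫ x, (f x + τ) * hplus x ∂G - ∫ x, f x * hminus x ∂G - τ| ≤ M * B := by
  have hf_top : MemLp f ⊤ G := memLp_top_of_bound hf (M + |a|) (.of_forall fun x => by
    rw [Real.norm_eq_abs]
    linarith [abs_sub_abs_le_abs_sub (f x) a, hfa x])
  have bound : ∀ x, ‖(f x - a) * (hplus x - hminus x)‖ ≤ M * B := fun x => by
    rw [Real.norm_eq_abs, abs_mul]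
    exact mul_le_mul (hfa x) (hB x) (abs_nonneg _) ((abs_nonneg _).trans (hfa x))
  rw [integral_add_mul_sub_integral_mul_sub_eq hf_top hplus_one hminus_one a τ]
  simpa using norm_integral_le_of_norm_le_const (μ := G) (.of_forall bound)

theorem stmt1_general
    {Ω : Type*} [MeasurableSpace Ω] (P : Measure Ω)
    (U Z Y0 Y1 : Ω → ℝ)
    (G : Measure ℝ) [IsProbabilityMeasure G]
    (lam : Measure ℝ)
    (p : ℝ → ℝ → ℝ)
    (α0 α1 τ : ℝ → ℝ) (hα0m : Measurable α0)
    (hτdef : ∀ u, τ u = α1 u - α0 u)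
    (hJoint0 : ∀ g φf : ℝ → ℝ, Measurable g → Measurable φf →
      (∃ Cg, ∀ z, |g z| ≤ Cg) → (∃ Cf, ∀ u, |φf u| ≤ Cf) →
      ∫ ω, Y0 ω * g (Z ω) * φf (U ω) ∂P
        = ∫ u, α0 u * (∫ z, g z * p z u ∂lam) * φf u ∂G)
    (hJoint1 : ∀ g φf : ℝ → ℝ, Measurable g → Measurable φf →
      (∃ Cg, ∀ z, |g z| ≤ Cg) → (∃ Cf, ∀ u, |φf u| ≤ Cf) →
      ∫ ω, Y1 ω * g (Z ω) * φf (U ω) ∂P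
        = ∫ u, α1 u * (∫ z, g z * p z u ∂lam) * φf u ∂G)
    -- marginal density of Z (Assumption 2):
    (hDens : ∀ g : ℝ → ℝ, Measurable g → (∃ Cg, ∀ z, |g z| ≤ Cg) →
      ∫ ω, g (Z ω) ∂P = ∫ u, (∫ z, g z * p z u ∂lam) ∂G)
    (c : ℝ) (γp γm : ℝ → ℝ) (hγpm : Measurable γp) (hγmm : Measurable γm)
    (Cγ : ℝ) (hγpb : ∀ z, |γp z| ≤ Cγ) (hγmb : ∀ z, |γm z| ≤ Cγ)
    (hplus hminus : ℝ → ℝ)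
    (hhp : ∀ u, hplus u = ∫ z in Set.Ici c, γp z * p z u ∂lam)
    (hhm : ∀ u, hminus u = ∫ z in Set.Iio c, γm z * p z u ∂lam)
    -- normalization of the weights:
    (hnormp : ∫ ω, (if c ≤ Z ω then γp (Z ω) else 0) ∂P = 1)
    (hnormm : ∫ ω, (if Z ω < c then γm (Z ω) else 0) ∂P = 1)
    -- constant treatment effect and uniform bound on the control response:
    (τ0 : ℝ) (hτconst : ∀ u, τ u = τ0)
    (M a0 : ℝ) (hMa : ∀ u, |α0 u - a0| ≤ M) :
    ∀ B : ℝ, (∀ u, |hplus u - hminus u| ≤ B) →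
      |(∫ ω, (if c ≤ Z ω then γp (Z ω) * (if c ≤ Z ω then Y1 ω else Y0 ω) else 0) ∂P)
        - (∫ ω, (if Z ω < c then γm (Z ω) * (if c ≤ Z ω then Y1 ω else Y0 ω) else 0) ∂P)
        - τ0| ≤ M * B := by
  intro B hB
  obtain rfl : α1 = fun u => α0 u + τ0 := funext fun u => by linarith [hτdef u, hτconst u]
  have rep0 : ∀ g : ℝ → ℝ, Measurable g → (∃ C, ∀ z, |g z| ≤ C) →
      ∫ ω, Y0 ω * g (Z ω) ∂P = ∫ u, α0 u * ∫ z, g z * p z u ∂lam ∂G := fun g hg hgC => by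
    simpa using hJoint0 g 1 hg measurable_const hgC ⟨1, by simp⟩
  have rep1 : ∀ g : ℝ → ℝ, Measurable g → (∃ C, ∀ z, |g z| ≤ C) →
      ∫ ω, Y1 ω * g (Z ω) ∂P = ∫ u, (α0 u + τ0) * ∫ z, g z * p z u ∂lam ∂G := fun g hg hgC => by
    simpa using hJoint1 g 1 hg measurable_const hgC ⟨1, by simp⟩
  have repZ : ∀ g : ℝ → ℝ, Measurable g → (∃ C, ∀ z, |g z| ≤ C) →
      ∫ ω, 1 * g (Z ω) ∂P = ∫ u, 1 * ∫ z, g z * p z u ∂lam ∂G := fun g hg hgC => by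
    simpa using hDens g hg hgC
  have hplus_one : ∫ u, hplus u ∂G = 1 := by
    simpa [← hhp, Set.indicator_apply, hnormp] using
      (integral_mul_indicator_comp_eq repZ (measurableSet_Ici (a := c)) hγpm hγpb).symm
  have hminus_one : ∫ u, hminus u ∂G = 1 := by
    simpa [← hhm, Set.indicator_apply, hnormm] using
      (integral_mul_indicator_comp_eq repZ (measurableSet_Iio (a := c)) hγmm hγmb).symm
  have treated := integral_mul_indicator_comp_eq rep1 (measurableSet_Ici (a := c)) hγpm hγpb
  have control := integral_mul_indicator_comp_eq rep0 (measurableSet_Iio (a := c)) hγmm hγmb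
  have treated_integrand : ∀ ω, (if c ≤ Z ω then γp (Z ω) * (if c ≤ Z ω then Y1 ω else Y0 ω)
      else 0) = Y1 ω * (Set.Ici c).indicator γp (Z ω) := fun ω => by
    by_cases h : c ≤ Z ω <;> simp [h, mul_comm]
  have control_integrand : ∀ ω, (if Z ω < c then γm (Z ω) * (if c ≤ Z ω then Y1 ω else Y0 ω)
      else 0) = Y0 ω * (Set.Iio c).indicator γm (Z ω) := fun ω => by
    by_cases h : Z ω < c <;> simp [h, not_le_of_gt, mul_comm]
  simp_rw [treated_integrand, control_integrand, treated, control, ← hhp, ← hhm]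
  exact abs_integral_add_mul_sub_integral_mul_sub_le hα0m.aestronglyMeasurable hMa hplus_one
    hminus_one hB τ0

/-- Corollary 1: under constant treatment effects and normalized weights, the
bias of the weighted estimator is bounded by `M` times any uniform bound on
`|h₊ - h₋|` (hence by `M · sup_u |h₊(u) - h₋(u)|`). -/
theorem stmt1
    {Ω : Type*} [MeasurableSpace Ω] (P : Measure Ω) [IsProbabilityMeasure P]
    (U Z Y0 Y1 : Ω → ℝ)
    (hUm : Measurable U) (hZm : Measurable Z)
    (hY0m : Measurable Y0) (hY1m : Measurable Y1)
    (CY : ℝ) (hY0b : ∀ ω, |Y0 ω| ≤ CY) (hY1b : ∀ ω, |Y1 ω| ≤ CY)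
    (G : Measure ℝ) [IsProbabilityMeasure G]
    (lam : Measure ℝ) [SigmaFinite lam]
    (p : ℝ → ℝ → ℝ) (hpm : Measurable (Function.uncurry p)) (hpnn : ∀ z u, 0 ≤ p z u)
    (α0 α1 τ : ℝ → ℝ) (hα0m : Measurable α0) (hα1m : Measurable α1)
    (hτdef : ∀ u, τ u = α1 u - α0 u)
    (hJoint0 : ∀ g φf : ℝ → ℝ, Measurable g → Measurable φf →
      (∃ Cg, ∀ z, |g z| ≤ Cg) → (∃ Cf, ∀ u, |φf u| ≤ Cf) →
      ∫ ω, Y0 ω * g (Z ω) * φf (U ω) ∂P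
        = ∫ u, α0 u * (∫ z, g z * p z u ∂lam) * φf u ∂G)
    (hJoint1 : ∀ g φf : ℝ → ℝ, Measurable g → Measurable φf →
      (∃ Cg, ∀ z, |g z| ≤ Cg) → (∃ Cf, ∀ u, |φf u| ≤ Cf) →
      ∫ ω, Y1 ω * g (Z ω) * φf (U ω) ∂P
        = ∫ u, α1 u * (∫ z, g z * p z u ∂lam) * φf u ∂G)
    -- marginal density of Z (Assumption 2):
    (hDens : ∀ g : ℝ → ℝ, Measurable g → (∃ Cg, ∀ z, |g z| ≤ Cg) →
      ∫ ω, g (Z ω) ∂P = ∫ u, (∫ z, g z * p z u ∂lam) ∂G)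
    (c : ℝ) (γp γm : ℝ → ℝ) (hγpm : Measurable γp) (hγmm : Measurable γm)
    (Cγ : ℝ) (hγpb : ∀ z, |γp z| ≤ Cγ) (hγmb : ∀ z, |γm z| ≤ Cγ)
    (hplus hminus : ℝ → ℝ)
    (hhp : ∀ u, hplus u = ∫ z in Set.Ici c, γp z * p z u ∂lam)
    (hhm : ∀ u, hminus u = ∫ z in Set.Iio c, γm z * p z u ∂lam)
    -- normalization of the weights:
    (hnormp : ∫ ω, (if c ≤ Z ω then γp (Z ω) else 0) ∂P = 1)
    (hnormm : ∫ ω, (if Z ω < c then γm (Z ω) else 0) ∂P = 1)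
    -- constant treatment effect and uniform bound on the control response:
    (τ0 : ℝ) (hτconst : ∀ u, τ u = τ0)
    (M a0 : ℝ) (hMa : ∀ u, |α0 u - a0| ≤ M) :
    ∀ B : ℝ, (∀ u, |hplus u - hminus u| ≤ B) →
      |(∫ ω, (if c ≤ Z ω then γp (Z ω) * (if c ≤ Z ω then Y1 ω else Y0 ω) else 0) ∂P)
        - (∫ ω, (if Z ω < c then γm (Z ω) * (if c ≤ Z ω then Y1 ω else Y0 ω) else 0) ∂P)
        - τ0| ≤ M * B :=
  stmt1_general P U Z Y0 Y1 G lam p α0 α1 τ hα0m hτdef hJoint0 hJoint1 hDens c γp γm hγpm hγmm Cγ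
    hγpb hγmb hplus hminus hhp hhm hnormp hnormm τ0 hτconst M a0 hMa
end

section
/- Under the setup of the bias decomposition theorem with normalized weights ($\int h_+ \, dG = \int h_- \, dG = 1$), suppose there exist constants $M, M' \geq 0$ and $\alpha_{(0)}, \tau \in \mathbb{R}$ with $|\alpha_{(0)}(u) - \alpha_{(0)}| \leq M$ and $|\tau(u) - \tau| \leq M'$ for all $u$. Let $w : \mathbb{R} \to [0, \infty)$ satisfy $\int w(u)\, dG(u) = 1$ and define $\tau_w = \int w(u)\tau(u)\, dG(u)$. Then $|\mathbb{E}[\gamma_+(Z) Y \mathbf{1}\{Z \geq c\}] - \mathbb{E}[\gamma_-(Z) Y \mathbf{1}\{Z < c\}] - \tau_w| \leq M \sup_u |h_+(u) - h_-(u)| + M' \sup_u |h_+(u) - w(u)|$. -/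
/-!
The observed integrals factor through the latent variable: the treated arm equals
`∫ α₁ h₊ dG` and the control arm `∫ α₀ h₋ dG`. With `τ = α₁ - α₀` the integrand of the bias
splits as
`α₁ h₊ - α₀ h₋ - w τ = (α₀ - a₀)(h₊ - h₋) + (τ - τ₀)(h₊ - w) + a₀ (h₊ - h₋) + τ₀ (h₊ - w)`,
and the last two terms integrate to zero because `h₊`, `h₋` and `w` all have `G`-integral one.
The remaining two terms are bounded pointwise by `M B` and `M' B'`.
-/

open MeasureTheory

section BiasDecomposition

variable {X : Type*} [MeasurableSpace X] {μ : Measure X}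

lemma MeasureTheory.Integrable.mul_of_abs_sub_le {f g : X → ℝ} {a M : ℝ} (hg : Integrable g μ)
    (hf : AEStronglyMeasurable f μ) (hfa : ∀ u, |f u - a| ≤ M) :
    Integrable (fun u => f u * g u) μ :=
  hg.bdd_mul hf (c := |a| + M) <| .of_forall fun u => by
    rw [Real.norm_eq_abs]
    linarith [abs_sub_abs_le_abs_sub (f u) a, hfa u]

lemma abs_integral_mul_le_of_abs_le [IsProbabilityMeasure μ] {f g : X → ℝ} {M B : ℝ}
    (hf : ∀ u, |f u| ≤ M) (hg : ∀ u, |g u| ≤ B) :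
    |∫ u, f u * g u ∂μ| ≤ M * B := by
  have h := norm_integral_le_of_norm_le_const (μ := μ) (C := M * B) <| .of_forall fun u => by
    rw [Real.norm_eq_abs, abs_mul]
    exact (mul_le_mul_of_nonneg_left (hg u) (abs_nonneg _)).trans
      (mul_le_mul_of_nonneg_right (hf u) ((abs_nonneg _).trans (hg u)))
  rwa [Real.norm_eq_abs, probReal_univ, mul_one] at h

variable {α₀ α₁ τ hp hm w : X → ℝ} {a₀ τ₀ M M' : ℝ}

lemma integral_bias_eq (hα₀ : AEStronglyMeasurable α₀ μ) (hα₁ : AEStronglyMeasurable α₁ μ)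
    (hτ : ∀ u, τ u = α₁ u - α₀ u)
    (hα₀a : ∀ u, |α₀ u - a₀| ≤ M) (hττ : ∀ u, |τ u - τ₀| ≤ M')
    (hpi : Integrable hp μ) (hmi : Integrable hm μ) (hwi : Integrable w μ)
    (hm_eq : ∫ u, hm u ∂μ = ∫ u, hp u ∂μ) (hw_eq : ∫ u, w u ∂μ = ∫ u, hp u ∂μ) :
    (∫ u, α₁ u * hp u ∂μ) - (∫ u, α₀ u * hm u ∂μ) - (∫ u, w u * τ u ∂μ)
      = (∫ u, (α₀ u - a₀) * (hp u - hm u) ∂μ) + ∫ u, (τ u - τ₀) * (hp u - w u) ∂μ := by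
  have hτm : AEStronglyMeasurable τ μ := by
    rw [show τ = α₁ - α₀ from funext hτ]
    exact hα₁.sub hα₀
  have hα₁τ : ∀ u, |α₁ u - (a₀ + τ₀)| ≤ M + M' := fun u => by
    rw [show α₁ u - (a₀ + τ₀) = (α₀ u - a₀) + (τ u - τ₀) by rw [hτ]; ring]
    exact (abs_add_le _ _).trans (add_le_add (hα₀a u) (hττ u))
  have hpmi : Integrable (fun u => hp u - hm u) μ := hpi.sub hmi
  have hpwi : Integrable (fun u => hp u - w u) μ := hpi.sub hwi
  have hA : Integrable (fun u => (α₀ u - a₀) * (hp u - hm u)) μ :=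
    hpmi.mul_of_abs_sub_le (hα₀.sub aestronglyMeasurable_const) (a := 0) (by simpa using hα₀a)
  have hC : Integrable (fun u => (τ u - τ₀) * (hp u - w u)) μ :=
    hpwi.mul_of_abs_sub_le (hτm.sub aestronglyMeasurable_const) (a := 0) (by simpa using hττ)
  have hAC : Integrable (fun u => (α₀ u - a₀) * (hp u - hm u) + (τ u - τ₀) * (hp u - w u)) μ :=
    hA.add hC
  have hD : Integrable (fun u => a₀ * (hp u - hm u)) μ := hpmi.const_mul a₀
  have hE : Integrable (fun u => τ₀ * (hp u - w u)) μ := hpwi.const_mul τ₀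
  have hDE : Integrable (fun u => a₀ * (hp u - hm u) + τ₀ * (hp u - w u)) μ := hD.add hE
  have hα₁hp : Integrable (fun u => α₁ u * hp u) μ := hpi.mul_of_abs_sub_le hα₁ hα₁τ
  have hα₀hm : Integrable (fun u => α₀ u * hm u) μ := hmi.mul_of_abs_sub_le hα₀ hα₀a
  have hα₁hp_α₀hm : Integrable (fun u => α₁ u * hp u - α₀ u * hm u) μ := hα₁hp.sub hα₀hm
  have hwτ : Integrable (fun u => w u * τ u) μ := by
    simpa only [mul_comm] using hwi.mul_of_abs_sub_le hτm hττ
  have hsplit : (fun u => α₁ u * hp u - α₀ u * hm u - w u * τ u)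
      = fun u => ((α₀ u - a₀) * (hp u - hm u) + (τ u - τ₀) * (hp u - w u))
        + (a₀ * (hp u - hm u) + τ₀ * (hp u - w u)) := funext fun u => by
    rw [show α₁ u = τ u + α₀ u by rw [hτ]; ring]
    ring
  rw [← integral_sub hα₁hp hα₀hm, ← integral_sub hα₁hp_α₀hm hwτ, hsplit,
    integral_add hAC hDE, integral_add hA hC, integral_add hD hE,
    integral_const_mul, integral_const_mul, integral_sub hpi hmi, integral_sub hpi hwi,
    hm_eq, hw_eq]
  ring

lemma abs_integral_bias_le [IsProbabilityMeasure μ]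
    (hα₀ : AEStronglyMeasurable α₀ μ) (hα₁ : AEStronglyMeasurable α₁ μ)
    (hτ : ∀ u, τ u = α₁ u - α₀ u)
    (hα₀a : ∀ u, |α₀ u - a₀| ≤ M) (hττ : ∀ u, |τ u - τ₀| ≤ M')
    (hp1 : ∫ u, hp u ∂μ = 1) (hm1 : ∫ u, hm u ∂μ = 1) (hw1 : ∫ u, w u ∂μ = 1)
    {B B' : ℝ} (hB : ∀ u, |hp u - hm u| ≤ B) (hB' : ∀ u, |hp u - w u| ≤ B') :
    |(∫ u, α₁ u * hp u ∂μ) - (∫ u, α₀ u * hm u ∂μ) - (∫ u, w u * τ u ∂μ)| ≤ M * B + M' * B' := by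
  have integrable_of_eq_one {f : X → ℝ} (hf : ∫ u, f u ∂μ = 1) : Integrable f μ :=
    .of_integral_ne_zero (by simp [hf])
  rw [integral_bias_eq hα₀ hα₁ hτ hα₀a hττ (integrable_of_eq_one hp1) (integrable_of_eq_one hm1)
    (integrable_of_eq_one hw1) (by rw [hp1, hm1]) (by rw [hp1, hw1])]
  exact (abs_add_le _ _).trans <| add_le_add
    (abs_integral_mul_le_of_abs_le hα₀a hB) (abs_integral_mul_le_of_abs_le hττ hB')

end BiasDecomposition

lemma integral_indicator_mul_eq_setIntegral {β : Type*} [MeasurableSpace β] {μ : Measure β}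
    {t : Set β} (ht : MeasurableSet t) (f g : β → ℝ) :
    ∫ z, t.indicator f z * g z ∂μ = ∫ z in t, f z * g z ∂μ := by
  simp_rw [← Set.indicator_mul_left]
  exact integral_indicator ht

section Truncation

variable {Ω : Type*} [MeasurableSpace Ω] {P : Measure Ω} {G lam : Measure ℝ} {U Z : Ω → ℝ}
  {p : ℝ → ℝ → ℝ} {s : Set ℝ} {γ : ℝ → ℝ} {C : ℝ}

lemma integral_indicator_comp_mul_eq {Y : Ω → ℝ} {a : ℝ → ℝ}
    (hJoint : ∀ g φf : ℝ → ℝ, Measurable g → Measurable φf →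
      (∃ Cg, ∀ z, |g z| ≤ Cg) → (∃ Cf, ∀ u, |φf u| ≤ Cf) →
      ∫ ω, Y ω * g (Z ω) * φf (U ω) ∂P = ∫ u, a u * (∫ z, g z * p z u ∂lam) * φf u ∂G)
    (hs : MeasurableSet s) (hγ : Measurable γ) (hγC : ∀ z, |γ z| ≤ C) :
    ∫ ω, s.indicator γ (Z ω) * Y ω ∂P = ∫ u, a u * ∫ z in s, γ z * p z u ∂lam ∂G := by
  have := hJoint (s.indicator γ) 1 (hγ.indicator hs) measurable_const
    ⟨C, fun z => (norm_indicator_le_norm_self γ z).trans (hγC z)⟩ ⟨1, fun _ => by simp⟩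
  simpa only [Pi.one_apply, mul_one, mul_comm (Y _),
    integral_indicator_mul_eq_setIntegral hs] using this

lemma integral_indicator_comp_eq
    (hDens : ∀ g : ℝ → ℝ, Measurable g → (∃ Cg, ∀ z, |g z| ≤ Cg) →
      ∫ ω, g (Z ω) ∂P = ∫ u, (∫ z, g z * p z u ∂lam) ∂G)
    (hs : MeasurableSet s) (hγ : Measurable γ) (hγC : ∀ z, |γ z| ≤ C) :
    ∫ ω, s.indicator γ (Z ω) ∂P = ∫ u, ∫ z in s, γ z * p z u ∂lam ∂G := by
  simpa only [integral_indicator_mul_eq_setIntegral hs] using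
    hDens (s.indicator γ) (hγ.indicator hs)
      ⟨C, fun z => (norm_indicator_le_norm_self γ z).trans (hγC z)⟩

end Truncation

theorem stmt2_general
    {Ω : Type*} [MeasurableSpace Ω] (P : Measure Ω)
    (U Z Y0 Y1 : Ω → ℝ)
    (G : Measure ℝ) [IsProbabilityMeasure G]
    (lam : Measure ℝ)
    (p : ℝ → ℝ → ℝ)
    (α0 α1 τ : ℝ → ℝ) (hα0m : Measurable α0) (hα1m : Measurable α1)
    (hτdef : ∀ u, τ u = α1 u - α0 u)
    (hJoint0 : ∀ g φf : ℝ → ℝ, Measurable g → Measurable φf →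
      (∃ Cg, ∀ z, |g z| ≤ Cg) → (∃ Cf, ∀ u, |φf u| ≤ Cf) →
      ∫ ω, Y0 ω * g (Z ω) * φf (U ω) ∂P
        = ∫ u, α0 u * (∫ z, g z * p z u ∂lam) * φf u ∂G)
    (hJoint1 : ∀ g φf : ℝ → ℝ, Measurable g → Measurable φf →
      (∃ Cg, ∀ z, |g z| ≤ Cg) → (∃ Cf, ∀ u, |φf u| ≤ Cf) →
      ∫ ω, Y1 ω * g (Z ω) * φf (U ω) ∂P
        = ∫ u, α1 u * (∫ z, g z * p z u ∂lam) * φf u ∂G)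
    (hDens : ∀ g : ℝ → ℝ, Measurable g → (∃ Cg, ∀ z, |g z| ≤ Cg) →
      ∫ ω, g (Z ω) ∂P = ∫ u, (∫ z, g z * p z u ∂lam) ∂G)
    (c : ℝ) (γp γm : ℝ → ℝ) (hγpm : Measurable γp) (hγmm : Measurable γm)
    (Cγ : ℝ) (hγpb : ∀ z, |γp z| ≤ Cγ) (hγmb : ∀ z, |γm z| ≤ Cγ)
    (hplus hminus : ℝ → ℝ)
    (hhp : ∀ u, hplus u = ∫ z in Set.Ici c, γp z * p z u ∂lam)
    (hhm : ∀ u, hminus u = ∫ z in Set.Iio c, γm z * p z u ∂lam)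
    -- normalization of the weights:
    (hnormp : ∫ ω, (if c ≤ Z ω then γp (Z ω) else 0) ∂P = 1)
    (hnormm : ∫ ω, (if Z ω < c then γm (Z ω) else 0) ∂P = 1)
    -- uniform bounds on the variation of α₀ and τ:
    (M M' a0 τ0 : ℝ) (hMa : ∀ u, |α0 u - a0| ≤ M) (hM't : ∀ u, |τ u - τ0| ≤ M')
    -- target weight function:
    (w : ℝ → ℝ)
    (hwint : ∫ u, w u ∂G = 1)
    (τw : ℝ) (hτw : τw = ∫ u, w u * τ u ∂G) :
    ∀ B B' : ℝ, (∀ u, |hplus u - hminus u| ≤ B) → (∀ u, |hplus u - w u| ≤ B') →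
      |(∫ ω, (if c ≤ Z ω then γp (Z ω) * (if c ≤ Z ω then Y1 ω else Y0 ω) else 0) ∂P)
        - (∫ ω, (if Z ω < c then γm (Z ω) * (if c ≤ Z ω then Y1 ω else Y0 ω) else 0) ∂P)
        - τw| ≤ M * B + M' * B' := by
  intro B B' hB hB'
  have htreated : (∫ ω, (if c ≤ Z ω then γp (Z ω) * (if c ≤ Z ω then Y1 ω else Y0 ω) else 0) ∂P)
      = ∫ u, α1 u * hplus u ∂G := by
    simp_rw [hhp, ← integral_indicator_comp_mul_eq hJoint1 measurableSet_Ici hγpm hγpb]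
    congr 1 with ω
    by_cases h : c ≤ Z ω <;> simp [h]
  have hcontrol : (∫ ω, (if Z ω < c then γm (Z ω) * (if c ≤ Z ω then Y1 ω else Y0 ω) else 0) ∂P)
      = ∫ u, α0 u * hminus u ∂G := by
    simp_rw [hhm, ← integral_indicator_comp_mul_eq hJoint0 measurableSet_Iio hγmm hγmb]
    congr 1 with ω
    by_cases h : Z ω < c <;> simp [h, not_le.mpr]
  have hplus_one : ∫ u, hplus u ∂G = 1 := by
    simp_rw [hhp, ← integral_indicator_comp_eq hDens measurableSet_Ici hγpm hγpb, ← hnormp,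
      Set.indicator_apply, Set.mem_Ici]
  have hminus_one : ∫ u, hminus u ∂G = 1 := by
    simp_rw [hhm, ← integral_indicator_comp_eq hDens measurableSet_Iio hγmm hγmb, ← hnormm,
      Set.indicator_apply, Set.mem_Iio]
  rw [htreated, hcontrol, hτw]
  exact abs_integral_bias_le hα0m.aestronglyMeasurable hα1m.aestronglyMeasurable hτdef hMa hM't
    hplus_one hminus_one hwint hB hB'

/-- Corollary 2: bias bound for weighted estimators targeting a weighted
treatment effect `τ_w`, with uniform bounds `M` on the variation of `α₀` and
`M'` on the variation of `τ`, quantified over arbitrary uniform bounds on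
`|h₊ - h₋|` and `|h₊ - w|` (hence bounding by the suprema). -/
theorem stmt2
    {Ω : Type*} [MeasurableSpace Ω] (P : Measure Ω) [IsProbabilityMeasure P]
    (U Z Y0 Y1 : Ω → ℝ)
    (hUm : Measurable U) (hZm : Measurable Z)
    (hY0m : Measurable Y0) (hY1m : Measurable Y1)
    (CY : ℝ) (hY0b : ∀ ω, |Y0 ω| ≤ CY) (hY1b : ∀ ω, |Y1 ω| ≤ CY)
    (G : Measure ℝ) [IsProbabilityMeasure G]
    (lam : Measure ℝ) [SigmaFinite lam]
    (p : ℝ → ℝ → ℝ) (hpm : Measurable (Function.uncurry p)) (hpnn : ∀ z u, 0 ≤ p z u)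
    (α0 α1 τ : ℝ → ℝ) (hα0m : Measurable α0) (hα1m : Measurable α1)
    (hτdef : ∀ u, τ u = α1 u - α0 u)
    (hJoint0 : ∀ g φf : ℝ → ℝ, Measurable g → Measurable φf →
      (∃ Cg, ∀ z, |g z| ≤ Cg) → (∃ Cf, ∀ u, |φf u| ≤ Cf) →
      ∫ ω, Y0 ω * g (Z ω) * φf (U ω) ∂P
        = ∫ u, α0 u * (∫ z, g z * p z u ∂lam) * φf u ∂G)
    (hJoint1 : ∀ g φf : ℝ → ℝ, Measurable g → Measurable φf →
      (∃ Cg, ∀ z, |g z| ≤ Cg) → (∃ Cf, ∀ u, |φf u| ≤ Cf) →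
      ∫ ω, Y1 ω * g (Z ω) * φf (U ω) ∂P
        = ∫ u, α1 u * (∫ z, g z * p z u ∂lam) * φf u ∂G)
    (hDens : ∀ g : ℝ → ℝ, Measurable g → (∃ Cg, ∀ z, |g z| ≤ Cg) →
      ∫ ω, g (Z ω) ∂P = ∫ u, (∫ z, g z * p z u ∂lam) ∂G)
    (c : ℝ) (γp γm : ℝ → ℝ) (hγpm : Measurable γp) (hγmm : Measurable γm)
    (Cγ : ℝ) (hγpb : ∀ z, |γp z| ≤ Cγ) (hγmb : ∀ z, |γm z| ≤ Cγ)
    (hplus hminus : ℝ → ℝ)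
    (hhp : ∀ u, hplus u = ∫ z in Set.Ici c, γp z * p z u ∂lam)
    (hhm : ∀ u, hminus u = ∫ z in Set.Iio c, γm z * p z u ∂lam)
    -- normalization of the weights:
    (hnormp : ∫ ω, (if c ≤ Z ω then γp (Z ω) else 0) ∂P = 1)
    (hnormm : ∫ ω, (if Z ω < c then γm (Z ω) else 0) ∂P = 1)
    -- uniform bounds on the variation of α₀ and τ:
    (M M' a0 τ0 : ℝ) (hMa : ∀ u, |α0 u - a0| ≤ M) (hM't : ∀ u, |τ u - τ0| ≤ M')
    -- target weight function:
    (w : ℝ → ℝ) (hwm : Measurable w) (hwnn : ∀ u, 0 ≤ w u)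
    (hwint : ∫ u, w u ∂G = 1)
    (τw : ℝ) (hτw : τw = ∫ u, w u * τ u ∂G) :
    ∀ B B' : ℝ, (∀ u, |hplus u - hminus u| ≤ B) → (∀ u, |hplus u - w u| ≤ B') →
      |(∫ ω, (if c ≤ Z ω then γp (Z ω) * (if c ≤ Z ω then Y1 ω else Y0 ω) else 0) ∂P)
        - (∫ ω, (if Z ω < c then γm (Z ω) * (if c ≤ Z ω then Y1 ω else Y0 ω) else 0) ∂P)
        - τw| ≤ M * B + M' * B' :=
  stmt2_general P U Z Y0 Y1 G lam p α0 α1 τ hα0m hα1m hτdef hJoint0 hJoint1 hDens c γp γm hγpm hγmm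
    Cγ hγpb hγmb hplus hminus hhp hhm hnormp hnormm M M' a0 τ0 hMa hM't w hwint τw hτw
end

section
/- Let $f(z) = \int \varphi(z - u)\, dG(u)$ be a mixture of standard normal densities (where $\varphi$ is the $\mathcal{N}(0,1)$ density and $G$ is any probability measure on $\mathbb{R}$). Then for all $z \in \mathbb{R}$ with $f(z) > 0$: $|f'(z)/f(z)| \leq \sqrt{-\log(2\pi f(z)^2)}$. -/
/-!
Write `X = z - U` with `U ~ G`, so that `f(z) = E φ(X)` and `f'(z) = -E[X φ(X)]`.
Cauchy–Schwarz with weight `φ(X)` gives `f'(z)² ≤ E[X² φ(X)] · f(z)`. Since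
`√(2π) φ(x) = exp(-x²/2)`, the entropy term `ψ log ψ` of `ψ = √(2π) φ(X)` is `-(√(2π)/2) X² φ(X)`,
so Jensen's inequality for the convex function `t log t` yields
`E[X² φ(X)] ≤ -f(z) log(2π f(z)²)`. Combining the two bounds gives the claim.
-/

open MeasureTheory Real

noncomputable def stdNormalPDF (x : ℝ) : ℝ := (√(2 * π))⁻¹ * exp (-(x ^ 2) / 2)

lemma sqrt_two_pi_mul_stdNormalPDF (x : ℝ) : √(2 * π) * stdNormalPDF x = exp (-(x ^ 2) / 2) := by
  rw [stdNormalPDF, ← mul_assoc, mul_inv_cancel₀ (by positivity), one_mul]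

lemma stdNormalPDF_pos (x : ℝ) : 0 < stdNormalPDF x := by
  unfold stdNormalPDF; positivity

lemma one_le_sqrt_two_pi : 1 ≤ √(2 * π) :=
  one_le_sqrt.2 (by nlinarith [pi_gt_three])

lemma stdNormalPDF_le_exp (x : ℝ) : stdNormalPDF x ≤ exp (-(x ^ 2) / 2) := by
  rw [← sqrt_two_pi_mul_stdNormalPDF]
  exact le_mul_of_one_le_left (stdNormalPDF_pos x).le one_le_sqrt_two_pi

lemma stdNormalPDF_le_one (x : ℝ) : stdNormalPDF x ≤ 1 :=
  (stdNormalPDF_le_exp x).trans (exp_le_one_iff.2 (by nlinarith [sq_nonneg x]))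

lemma abs_mul_stdNormalPDF_le_one (x : ℝ) : |x * stdNormalPDF x| ≤ 1 := by
  have h : |x| ≤ exp (x ^ 2 / 2) := by
    nlinarith [add_one_le_exp (x ^ 2 / 2), sq_abs x, sq_nonneg (|x| - 1)]
  rw [abs_mul, abs_of_pos (stdNormalPDF_pos x)]
  calc |x| * stdNormalPDF x ≤ exp (x ^ 2 / 2) * exp (-(x ^ 2) / 2) :=
        mul_le_mul h (stdNormalPDF_le_exp x) (stdNormalPDF_pos x).le (exp_pos _).le
    _ = 1 := by rw [← exp_add]; ring_nf; exact exp_zero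

lemma sq_mul_stdNormalPDF_le_two (x : ℝ) : x ^ 2 * stdNormalPDF x ≤ 2 := by
  have h : x ^ 2 ≤ 2 * exp (x ^ 2 / 2) := by
    nlinarith [add_one_le_exp (x ^ 2 / 2)]
  calc x ^ 2 * stdNormalPDF x ≤ 2 * exp (x ^ 2 / 2) * exp (-(x ^ 2) / 2) :=
        mul_le_mul h (stdNormalPDF_le_exp x) (stdNormalPDF_pos x).le (by positivity)
    _ = 2 := by rw [mul_assoc, ← exp_add]; ring_nf; rw [exp_zero, one_mul]

lemma hasDerivAt_stdNormalPDF (x : ℝ) : HasDerivAt stdNormalPDF (-(x * stdNormalPDF x)) x := by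
  have h : HasDerivAt (fun y : ℝ => -(y ^ 2) / 2) (-x) x :=
    (((hasDerivAt_id' x).pow 2).neg.div_const 2).congr_deriv (by push_cast; ring)
  exact (h.exp.const_mul (√(2 * π))⁻¹).congr_deriv (by rw [stdNormalPDF]; ring)

lemma continuous_stdNormalPDF : Continuous stdNormalPDF := by
  unfold stdNormalPDF; fun_prop

section Integrability

variable {Ω : Type*} [MeasurableSpace Ω] {μ : Measure Ω} [IsFiniteMeasure μ] {X : Ω → ℝ}

lemma integrable_comp_of_continuous_of_abs_le (hX : AEMeasurable X μ) {h : ℝ → ℝ}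
    (hh : Continuous h) {C : ℝ} (hC : ∀ x, |h x| ≤ C) : Integrable (fun a => h (X a)) μ :=
  .of_bound (hh.measurable.comp_aemeasurable hX).aestronglyMeasurable C
    (ae_of_all _ fun a => hC (X a))

lemma integrable_stdNormalPDF_comp (hX : AEMeasurable X μ) :
    Integrable (fun a => stdNormalPDF (X a)) μ :=
  integrable_comp_of_continuous_of_abs_le hX continuous_stdNormalPDF fun x => by
    rw [abs_of_pos (stdNormalPDF_pos x)]; exact stdNormalPDF_le_one x

lemma integrable_mul_stdNormalPDF_comp (hX : AEMeasurable X μ) :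
    Integrable (fun a => X a * stdNormalPDF (X a)) μ :=
  integrable_comp_of_continuous_of_abs_le hX (continuous_id.mul continuous_stdNormalPDF)
    abs_mul_stdNormalPDF_le_one

lemma integrable_sq_mul_stdNormalPDF_comp (hX : AEMeasurable X μ) :
    Integrable (fun a => X a ^ 2 * stdNormalPDF (X a)) μ :=
  integrable_comp_of_continuous_of_abs_le (h := fun x => x ^ 2 * stdNormalPDF x) (C := 2) hX
    ((continuous_pow 2).mul continuous_stdNormalPDF) fun x => by
      rw [abs_of_nonneg (mul_nonneg (sq_nonneg x) (stdNormalPDF_pos x).le)]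
      exact sq_mul_stdNormalPDF_le_two x

end Integrability

lemma hasDerivAt_integral_stdNormalPDF_sub (G : Measure ℝ) [IsFiniteMeasure G] (z : ℝ) :
    HasDerivAt (fun x => ∫ u, stdNormalPDF (x - u) ∂G)
      (-∫ u, (z - u) * stdNormalPDF (z - u) ∂G) z := by
  have hsub : ∀ x : ℝ, AEMeasurable (fun u => x - u) G := fun x => by fun_prop
  rw [← integral_neg]
  refine (hasDerivAt_integral_of_dominated_loc_of_deriv_le (F := fun x u => stdNormalPDF (x - u))
    (F' := fun x u => -((x - u) * stdNormalPDF (x - u))) (bound := fun _ => 1) Filter.univ_mem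
    (.of_forall fun x => (integrable_stdNormalPDF_comp (hsub x)).aestronglyMeasurable)
    (integrable_stdNormalPDF_comp (hsub z)) (integrable_mul_stdNormalPDF_comp (hsub z)).neg.1
    (ae_of_all _ fun u x _ => ?_) (integrable_const 1)
    (ae_of_all _ fun u x _ => ?_)).2
  · rw [norm_neg, norm_eq_abs]; exact abs_mul_stdNormalPDF_le_one _
  · exact (hasDerivAt_stdNormalPDF (x - u)).comp_sub_const x u

theorem sq_integral_mul_le_integral_sq_mul_mul_integral {α : Type*} [MeasurableSpace α]
    {μ : Measure α} {g w : α → ℝ} (hw : 0 ≤ w) (hw_int : Integrable w μ)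
    (hgw : Integrable (fun a => g a * w a) μ) (hg2w : Integrable (fun a => g a ^ 2 * w a) μ) :
    (∫ a, g a * w a ∂μ) ^ 2 ≤ (∫ a, g a ^ 2 * w a ∂μ) * ∫ a, w a ∂μ := by
  have hquad : ∀ t : ℝ, 0 ≤ (∫ a, g a ^ 2 * w a ∂μ) * (t * t) + 2 * (∫ a, g a * w a ∂μ) * t
      + ∫ a, w a ∂μ := by
    intro t
    have hexpand : ∫ a, (g a * t + 1) ^ 2 * w a ∂μ = (∫ a, g a ^ 2 * w a ∂μ) * (t * t)
        + 2 * (∫ a, g a * w a ∂μ) * t + ∫ a, w a ∂μ := by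
      have hpoint : ∀ a, (g a * t + 1) ^ 2 * w a
          = (t * t) * (g a ^ 2 * w a) + (2 * t) * (g a * w a) + w a := fun a => by ring
      simp_rw [hpoint]
      rw [integral_add, integral_add, integral_const_mul, integral_const_mul]
      · ring
      all_goals fun_prop
    rw [← hexpand]
    exact integral_nonneg fun a => mul_nonneg (sq_nonneg _) (hw a)
  have := discrim_le_zero hquad
  rw [discrim] at this
  nlinarith

theorem mul_log_integral_le_integral_mul_log {α : Type*} [MeasurableSpace α] {μ : Measure α}
    [IsProbabilityMeasure μ] {ψ : α → ℝ} (hψ : 0 ≤ ψ) (hψ_int : Integrable ψ μ)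
    (hψlogψ : Integrable (fun a => ψ a * log (ψ a)) μ) :
    (∫ a, ψ a ∂μ) * log (∫ a, ψ a ∂μ) ≤ ∫ a, ψ a * log (ψ a) ∂μ :=
  convexOn_mul_log.map_integral_le continuous_mul_log.continuousOn isClosed_Ici
    (ae_of_all _ hψ) hψ_int hψlogψ

theorem integral_sq_mul_stdNormalPDF_le {Ω : Type*} [MeasurableSpace Ω] {μ : Measure Ω}
    [IsProbabilityMeasure μ] {X : Ω → ℝ} (hX : AEMeasurable X μ) :
    ∫ a, X a ^ 2 * stdNormalPDF (X a) ∂μ ≤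
      -((∫ a, stdNormalPDF (X a) ∂μ) * log (2 * π * (∫ a, stdNormalPDF (X a) ∂μ) ^ 2)) := by
  set s := √(2 * π)
  set F := ∫ a, stdNormalPDF (X a) ∂μ
  set B := ∫ a, X a ^ 2 * stdNormalPDF (X a) ∂μ
  have hs : 0 < s := by positivity
  have hψlogψ : ∀ a, s * stdNormalPDF (X a) * log (s * stdNormalPDF (X a))
      = -(s / 2) * (X a ^ 2 * stdNormalPDF (X a)) := fun a => by
    rw [sqrt_two_pi_mul_stdNormalPDF, log_exp, ← sqrt_two_pi_mul_stdNormalPDF]; ring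
  have hJensen := mul_log_integral_le_integral_mul_log (μ := μ)
    (fun a => mul_nonneg hs.le (stdNormalPDF_pos (X a)).le)
    ((integrable_stdNormalPDF_comp hX).const_mul s)
    (((integrable_sq_mul_stdNormalPDF_comp hX).const_mul (-(s / 2))).congr
      (ae_of_all _ fun a => (hψlogψ a).symm))
  simp only [hψlogψ, integral_const_mul] at hJensen
  change s * F * log (s * F) ≤ -(s / 2) * B at hJensen
  have hlog : log (2 * π * F ^ 2) = 2 * log (s * F) := by
    rw [show 2 * π * F ^ 2 = (s * F) ^ 2 by rw [mul_pow, sq_sqrt (by positivity)], log_pow]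
    norm_num
  rw [hlog]
  nlinarith

/-- Gaussian-mixture score bound (Jiang–Zhang Lemma A.1): for a mixture of
standard normal densities `f(z) = ∫ φ(z - u) dG(u)`, one has
`|f'(z)/f(z)| ≤ √(-log(2π f(z)²))` wherever `f(z) > 0`. -/
theorem stmt7
    (G : Measure ℝ) [IsProbabilityMeasure G]
    (φ f : ℝ → ℝ)
    (hφ : ∀ x, φ x = (Real.sqrt (2 * Real.pi))⁻¹ * Real.exp (-(x ^ 2) / 2))
    (hf : ∀ z, f z = ∫ u, φ (z - u) ∂G) :
    ∀ z, 0 < f z →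
      |deriv f z / f z| ≤ Real.sqrt (-Real.log (2 * Real.pi * (f z) ^ 2)) := by
  intro z hfz
  obtain rfl : φ = stdNormalPDF := funext hφ
  have hX : AEMeasurable (fun u => z - u) G := by fun_prop
  have hderiv : deriv f z = -∫ u, (z - u) * stdNormalPDF (z - u) ∂G := by
    rw [funext hf]
    exact (hasDerivAt_integral_stdNormalPDF_sub G z).deriv
  have hCS := sq_integral_mul_le_integral_sq_mul_mul_integral (g := fun u => z - u)
    (fun u => (stdNormalPDF_pos (z - u)).le) (integrable_stdNormalPDF_comp hX)
    (integrable_mul_stdNormalPDF_comp hX) (integrable_sq_mul_stdNormalPDF_comp hX)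
  have hentropy := integral_sq_mul_stdNormalPDF_le hX
  rw [← hf z] at hCS hentropy
  apply abs_le_sqrt
  rw [div_pow, div_le_iff₀ (by positivity), hderiv, neg_sq]
  nlinarith
end

section
/- Fix $\rho > 0$ with $2\pi \rho^2 < 1$ and $M > 0$. There exist a probability measure $G$ on $\mathbb{R}$ and a function $\alpha$ with $|\alpha(u)| \leq M$ for all $u$, such that the marginal density $f(z) = \int \varphi(z - u)\, dG(u)$ satisfies $f(0) \geq \rho$ and the posterior mean $\mu(z) = \frac{\int \alpha(u)\varphi(z - u)\, dG(u)}{f(z)}$ satisfies $\mu'(0) = M\sqrt{-\log(2\pi \rho^2)}$. (Specifically, take $G = \frac{1}{2}(\delta_{-k} + \delta_k)$ with $k = \sqrt{-\log(2\pi\rho^2)}$ and $\alpha(u) = M\,\mathrm{sign}(u)$.) -/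
/-!
Put half of the prior mass at `-k` and half at `k`, where `φ k = ρ`, i.e.
`k = √(-log (2πρ²))`, and take `α = M · sign`. The marginal density at `0` is `φ k = ρ`,
the posterior mean is `M (φ (z - k) - φ (z + k)) / (φ (z - k) + φ (z + k))`, and since
`φ' x = -x φ x` its derivative at `0` is `M k`.
-/

open MeasureTheory ENNReal

lemma isProbabilityMeasure_half_dirac_add (a b : ℝ) :
    IsProbabilityMeasure ((2 : ℝ≥0∞)⁻¹ • (Measure.dirac a + Measure.dirac b)) :=
  ⟨by simp [ENNReal.inv_two_add_inv_two]⟩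

lemma integral_half_dirac_add (a b : ℝ) (f : ℝ → ℝ) :
    ∫ x, f x ∂((2 : ℝ≥0∞)⁻¹ • (Measure.dirac a + Measure.dirac b)) = (f a + f b) / 2 := by
  rw [integral_smul_measure,
    integral_add_measure (integrable_dirac enorm_lt_top) (integrable_dirac enorm_lt_top),
    integral_dirac, integral_dirac]
  simp [ENNReal.toReal_inv]
  ring

lemma posteriorMean_half_dirac_add (a b z : ℝ) (α φ : ℝ → ℝ) :
    (∫ u, α u * φ (z - u) ∂((2 : ℝ≥0∞)⁻¹ • (Measure.dirac a + Measure.dirac b))) /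
        (∫ u, φ (z - u) ∂((2 : ℝ≥0∞)⁻¹ • (Measure.dirac a + Measure.dirac b))) =
      (α a * φ (z - a) + α b * φ (z - b)) / (φ (z - a) + φ (z - b)) := by
  rw [integral_half_dirac_add, integral_half_dirac_add, div_div_div_cancel_right₀ two_ne_zero]

section StandardGaussian

variable {φ : ℝ → ℝ} (hφ : ∀ x, φ x = (Real.sqrt (2 * Real.pi))⁻¹ * Real.exp (-(x ^ 2) / 2))
include hφ

lemma gaussian_neg (x : ℝ) : φ (-x) = φ x := by
  rw [hφ, hφ, neg_sq]

lemma gaussian_pos (x : ℝ) : 0 < φ x := by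
  rw [hφ]
  positivity

lemma hasDerivAt_gaussian (x : ℝ) : HasDerivAt φ (-x * φ x) x := by
  rw [funext hφ]
  refine (((hasDerivAt_pow 2 x).fun_neg.div_const 2).exp.const_mul _).congr_deriv ?_
  norm_num
  ring

lemma gaussian_sqrt_neg_log {ρ : ℝ} (hρ : 0 < ρ) (hρ1 : 2 * Real.pi * ρ ^ 2 ≤ 1) :
    φ (Real.sqrt (-Real.log (2 * Real.pi * ρ ^ 2))) = ρ := by
  have hpos : 0 < 2 * Real.pi * ρ ^ 2 := by positivity
  have hexp : Real.exp (-Real.sqrt (-Real.log (2 * Real.pi * ρ ^ 2)) ^ 2 / 2)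
      = Real.sqrt (2 * Real.pi * ρ ^ 2) := by
    rw [Real.sq_sqrt, Real.sqrt_eq_rpow, Real.rpow_def_of_pos hpos]
    · ring_nf
    · exact neg_nonneg.2 (Real.log_nonpos hpos.le hρ1)
  rw [hφ, hexp, Real.sqrt_mul' _ (sq_nonneg ρ), Real.sqrt_sq hρ.le,
    inv_mul_cancel_left₀ (by positivity)]

lemma hasDerivAt_gaussian_twoPoint_ratio (a b k : ℝ) :
    HasDerivAt (fun z => (a * φ (z + k) + b * φ (z - k)) / (φ (z + k) + φ (z - k)))
      ((b - a) * k / 2) 0 := by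
  have hplus := (hasDerivAt_gaussian hφ (0 + k)).comp_add_const 0 k
  have hminus := (hasDerivAt_gaussian hφ (0 - k)).comp_sub_const 0 k
  have hden : φ (0 + k) + φ (0 - k) ≠ 0 :=
    (add_pos (gaussian_pos hφ _) (gaussian_pos hφ _)).ne'
  have hφk : φ k ≠ 0 := (gaussian_pos hφ k).ne'
  refine (((hplus.const_mul a).fun_add (hminus.const_mul b)).fun_div (hplus.fun_add hminus)
    hden).congr_deriv ?_
  simp only [zero_add, zero_sub, gaussian_neg hφ]
  field_simp
  ring

end StandardGaussian

/-- Lower-bound construction for the worst-case first derivative of the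
conditional response function under standard Gaussian measurement error: for
any `ρ > 0` with `2πρ² < 1` and any `M > 0`, there are a prior `G` and a
response `α` bounded by `M` whose marginal density at `0` is at least `ρ`
while the posterior mean has derivative `M √(-log(2πρ²))` at `0`. -/
theorem stmt9
    (ρ M : ℝ) (hρ : 0 < ρ) (hρ1 : 2 * Real.pi * ρ ^ 2 < 1) (hM : 0 < M)
    (φ : ℝ → ℝ)
    (hφ : ∀ x, φ x = (Real.sqrt (2 * Real.pi))⁻¹ * Real.exp (-(x ^ 2) / 2)) :
    ∃ G : Measure ℝ, IsProbabilityMeasure G ∧ ∃ α : ℝ → ℝ,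
      (∀ u, |α u| ≤ M)
      ∧ ρ ≤ (∫ u, φ ((0 : ℝ) - u) ∂G)
      ∧ deriv (fun z => (∫ u, α u * φ (z - u) ∂G) / (∫ u, φ (z - u) ∂G)) 0
          = M * Real.sqrt (-Real.log (2 * Real.pi * ρ ^ 2)) := by
  set k := Real.sqrt (-Real.log (2 * Real.pi * ρ ^ 2))
  have hk : 0 < k := Real.sqrt_pos.2 (neg_pos.2 (Real.log_neg (by positivity) hρ1))
  have hφk : φ k = ρ := gaussian_sqrt_neg_log hφ hρ hρ1.le
  refine ⟨_, isProbabilityMeasure_half_dirac_add (-k) k, fun u => M * Real.sign u, ?_, ?_, ?_⟩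
  · intro u
    rcases Real.sign_apply_eq u with h | h | h <;> simp [h, abs_of_pos hM, hM.le]
  · rw [integral_half_dirac_add]
    simp [gaussian_neg hφ, hφk]
  · simp_rw [posteriorMean_half_dirac_add, sub_neg_eq_add, Real.sign_neg, Real.sign_of_pos hk]
    convert (hasDerivAt_gaussian_twoPoint_ratio hφ (M * -1) (M * 1) k).deriv using 1
    ring
end
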